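/- Let P be a positive (possibly disjunctive) Datalog program without occurrences of the built-in inequality predicate ≠, and let F be a set of ground facts. If P ∪ F has a model, then P ∪ F' has a model, where F' is obtained from F by injectively renaming its constants to fresh constants that do not occur in P ∪ F. -/

import Mathlib

set_option autoImplicit false
set_option linter.unusedVariables false

/-! # ALCHOI with closed predicates: syntax -/

/-- Basic roles: role names `p` or their inverses `p⁻`. -/
inductive DLRole : Type
  | name : ℕ → DLRole
  | inv : ℕ → DLRole
  deriving DecidableEq

/-- The inverse `r⁻` of a basic role. -/
def DLRole.invert : DLRole → DLRole
  | .name p => .inv p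
  | .inv p => .name p

/-- The underlying role name of a basic role. -/
def DLRole.nameOf : DLRole → ℕ
  | .name p => p
  | .inv p => p

/-- ALCHOI concepts. -/
inductive DLConcept : Type
  | atom : ℕ → DLConcept            -- concept name
  | top : DLConcept
  | bot : DLConcept
  | nom : ℕ → DLConcept             -- nominal {a}
  | neg : DLConcept → DLConcept
  | conj : DLConcept → DLConcept → DLConcept
  | disj : DLConcept → DLConcept → DLConcept
  | ex : DLRole → DLConcept → DLConcept
  | all : DLRole → DLConcept → DLConcept
  deriving DecidableEq

/-- TBox inclusions: concept inclusions and role inclusions. -/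
inductive Inclusion : Type
  | concl : DLConcept → DLConcept → Inclusion
  | rolel : DLRole → DLRole → Inclusion
  deriving DecidableEq

/-- ABox assertions `A(a)`, `p(a,b)` (over concept and role *names*). -/
inductive Assertion : Type
  | ca : ℕ → ℕ → Assertion
  | ra : ℕ → ℕ → ℕ → Assertion
  deriving DecidableEq

abbrev TBox := List Inclusion
abbrev ABox := List Assertion

/-- A closed predicate is a concept name or a role name. -/
inductive ClosedPred : Type
  | cp : ℕ → ClosedPred
  | rp : ℕ → ClosedPred
  deriving DecidableEq

/-- A knowledge base with closed predicates. -/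
structure KB where
  tbox : TBox
  sig : Set ClosedPred
  abox : ABox

/-- Domain elements: named individuals (standard name assumption), fringe
individuals `c^α`, and anonymous elements. -/
inductive Elem : Type
  | ind : ℕ → Elem
  | fringe : ℕ → Inclusion → Elem
  | anon : ℕ → Elem
  deriving DecidableEq

def Elem.isFringe : Elem → Prop
  | .fringe _ _ => True
  | _ => False

/-! # Semantics -/

/-- An interpretation. -/
structure Interp where
  dom : Set Elem
  dom_nonempty : dom.Nonempty
  intC : ℕ → Set Elem
  intR : ℕ → Set (Elem × Elem)
  intI : ℕ → Elem
  intC_sub : ∀ A, intC A ⊆ dom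
  intR_sub : ∀ p, ∀ x ∈ intR p, x.1 ∈ dom ∧ x.2 ∈ dom
  intI_mem : ∀ a, intI a ∈ dom

/-- Extension of a basic role. -/
def Interp.roleExt (I : Interp) : DLRole → Set (Elem × Elem)
  | .name p => I.intR p
  | .inv p => {x | (x.2, x.1) ∈ I.intR p}

/-- Extension of a concept. -/
def Interp.cExt (I : Interp) : DLConcept → Set Elem
  | .atom A => I.intC A
  | .top => I.dom
  | .bot => ∅
  | .nom a => {I.intI a}
  | .neg C => I.dom \ I.cExt C
  | .conj C D => I.cExt C ∩ I.cExt D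
  | .disj C D => I.cExt C ∪ I.cExt D
  | .ex r C => {e | ∃ f, (e, f) ∈ I.roleExt r ∧ f ∈ I.cExt C}
  | .all r C => {e | e ∈ I.dom ∧ ∀ f, (e, f) ∈ I.roleExt r → f ∈ I.cExt C}

def Interp.satIncl (I : Interp) : Inclusion → Prop
  | .concl C D => I.cExt C ⊆ I.cExt D
  | .rolel r s => I.roleExt r ⊆ I.roleExt s

def Interp.satAssert (I : Interp) : Assertion → Prop
  | .ca A a => I.intI a ∈ I.intC A
  | .ra p a b => (I.intI a, I.intI b) ∈ I.intR p

def Interp.satTBox (I : Interp) (T : TBox) : Prop := ∀ α ∈ T, I.satIncl α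

def Interp.satABox (I : Interp) (Ab : ABox) : Prop := ∀ β ∈ Ab, I.satAssert β

/-- `I ⊨_Σ A`: `I` satisfies the ABox, and every membership in a closed
predicate is explicitly asserted. -/
def Interp.satABoxClosed (I : Interp) (sig : Set ClosedPred) (Ab : ABox) : Prop :=
  I.satABox Ab ∧
  (∀ A : ℕ, ClosedPred.cp A ∈ sig → ∀ e ∈ I.intC A,
      ∃ a : ℕ, e = Elem.ind a ∧ Assertion.ca A a ∈ Ab) ∧
  (∀ p : ℕ, ClosedPred.rp p ∈ sig → ∀ x ∈ I.intR p,
      ∃ a b : ℕ, x = (Elem.ind a, Elem.ind b) ∧ Assertion.ra p a b ∈ Ab)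

/-! ## Symbols occurring in a KB -/

def DLConcept.noms : DLConcept → Set ℕ
  | .nom a => {a}
  | .neg C => C.noms
  | .conj C D => C.noms ∪ D.noms
  | .disj C D => C.noms ∪ D.noms
  | .ex _ C => C.noms
  | .all _ C => C.noms
  | _ => ∅

def Inclusion.noms : Inclusion → Set ℕ
  | .concl C D => C.noms ∪ D.noms
  | .rolel _ _ => ∅

def Assertion.inds : Assertion → Set ℕ
  | .ca _ a => {a}
  | .ra _ a b => {a, b}

/-- The individuals occurring in a KB (nominals of the TBox and individuals
of the ABox). -/
def KB.inds (K : KB) : Set ℕ :=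
  (⋃ α ∈ K.tbox, Inclusion.noms α) ∪ ⋃ β ∈ K.abox, Assertion.inds β

def DLConcept.cnames : DLConcept → Set ℕ
  | .atom A => {A}
  | .neg C => C.cnames
  | .conj C D => C.cnames ∪ D.cnames
  | .disj C D => C.cnames ∪ D.cnames
  | .ex _ C => C.cnames
  | .all _ C => C.cnames
  | _ => ∅

def DLConcept.rnames : DLConcept → Set ℕ
  | .neg C => C.rnames
  | .conj C D => C.rnames ∪ D.rnames
  | .disj C D => C.rnames ∪ D.rnames
  | .ex r C => {r.nameOf} ∪ C.rnames
  | .all r C => {r.nameOf} ∪ C.rnames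
  | _ => ∅

def Inclusion.cnames : Inclusion → Set ℕ
  | .concl C D => C.cnames ∪ D.cnames
  | .rolel _ _ => ∅

def Inclusion.rnames : Inclusion → Set ℕ
  | .concl C D => C.rnames ∪ D.rnames
  | .rolel r s => {r.nameOf, s.nameOf}

def TBox.cnames (T : TBox) : Set ℕ := ⋃ α ∈ T, Inclusion.cnames α
def TBox.rnames (T : TBox) : Set ℕ := ⋃ α ∈ T, Inclusion.rnames α

def Assertion.cnames : Assertion → Set ℕ
  | .ca A _ => {A}
  | .ra _ _ _ => ∅

def Assertion.rnames : Assertion → Set ℕ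
  | .ca _ _ => ∅
  | .ra p _ _ => {p}

def KB.cnames (K : KB) : Set ℕ := TBox.cnames K.tbox ∪ ⋃ β ∈ K.abox, Assertion.cnames β
def KB.rnames (K : KB) : Set ℕ := TBox.rnames K.tbox ∪ ⋃ β ∈ K.abox, Assertion.rnames β

/-- An ABox over the given sets of concept names and role names. -/
def ABoxOver (Ab : ABox) (cns rns : Set ℕ) : Prop :=
  ∀ β ∈ Ab, match β with
    | Assertion.ca A _ => A ∈ cns
    | Assertion.ra p _ _ => p ∈ rns

/-- `I ⊨ K` for a KB with closed predicates: the standard name assumption for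
the individuals occurring in `K`, satisfaction of the TBox, and `I ⊨_Σ A`. -/
def isModel (I : Interp) (K : KB) : Prop :=
  (∀ a ∈ K.inds, I.intI a = Elem.ind a ∧ Elem.ind a ∈ I.dom) ∧
  I.satTBox K.tbox ∧
  I.satABoxClosed K.sig K.abox

/-! # Normal form -/

inductive IsBasicConcept : DLConcept → Prop
  | atom (A : ℕ) : IsBasicConcept (.atom A)
  | top : IsBasicConcept .top
  | bot : IsBasicConcept .bot
  | nom (a : ℕ) : IsBasicConcept (.nom a)

inductive IsConjOfBasic : DLConcept → Prop
  | basic {C : DLConcept} : IsBasicConcept C → IsConjOfBasic C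
  | conj {C D : DLConcept} : IsConjOfBasic C → IsConjOfBasic D → IsConjOfBasic (.conj C D)

inductive IsDisjOfBasic : DLConcept → Prop
  | basic {C : DLConcept} : IsBasicConcept C → IsDisjOfBasic C
  | disj {C D : DLConcept} : IsDisjOfBasic C → IsDisjOfBasic D → IsDisjOfBasic (.disj C D)

/-- Inclusions of shape (N1). -/
def IsN1 : Inclusion → Prop
  | .concl C D => IsConjOfBasic C ∧ IsDisjOfBasic D
  | .rolel _ _ => False

/-- The existential inclusion `A ⊑ ∃r.A'` (shape (N2)). -/
def exIncl (A : ℕ) (r : DLRole) (A' : ℕ) : Inclusion :=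
  .concl (.atom A) (.ex r (.atom A'))

def Inclusion.isExistential (α : Inclusion) : Prop := ∃ A r A', α = exIncl A r A'

/-- Inclusions in normal form (N1)--(N4). -/
inductive NormalIncl : Inclusion → Prop
  | n1 {C D : DLConcept} : IsConjOfBasic C → IsDisjOfBasic D → NormalIncl (.concl C D)
  | n2 (A : ℕ) (r : DLRole) (A' : ℕ) : NormalIncl (exIncl A r A')
  | n3 (A : ℕ) (r : DLRole) (A' : ℕ) : NormalIncl (.concl (.atom A) (.all r (.atom A')))
  | n4 (r s : DLRole) : NormalIncl (.rolel r s)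

/-- A TBox in normal form. -/
def NormalTBox (T : TBox) : Prop := ∀ α ∈ T, NormalIncl α

/-! # Role hierarchy and closed roles -/

/-- `r ⊑*_T s`. -/
inductive subRole (T : TBox) : DLRole → DLRole → Prop
  | refl (r : DLRole) : subRole T r r
  | inv {r s : DLRole} : subRole T r s → subRole T r.invert s.invert
  | step {r r₁ s : DLRole} : subRole T r r₁ → Inclusion.rolel r₁ s ∈ T → subRole T r s

/-- `r ∈_T Σ`: `r ⊑*_T s` for some `s` with `s` or `s⁻` in `Σ`. -/
def roleClosed (T : TBox) (sig : Set ClosedPred) (r : DLRole) : Prop :=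
  ∃ s : DLRole, subRole T r s ∧ ClosedPred.rp s.nameOf ∈ sig
/-! # Conjunctive queries -/

/-- Query atoms `A(x)`, `r(x,y)` over variables. -/
inductive QAtom : Type
  | ca : ℕ → ℕ → QAtom
  | ra : ℕ → ℕ → ℕ → QAtom
  deriving DecidableEq

def QAtom.vars : QAtom → Set ℕ
  | .ca _ x => {x}
  | .ra _ x y => {x, y}

/-- Variables of a set of atoms. -/
def qvarsS (s : Set QAtom) : Set ℕ := ⋃ a ∈ s, QAtom.vars a

/-- A conjunctive query with answer variables `ansVars`; all remaining
variables are existentially quantified. -/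
structure CQuery where
  atoms : List QAtom
  ansVars : List ℕ
  ansVars_mem : ∀ x ∈ ansVars, x ∈ qvarsS {a | a ∈ atoms}

def CQuery.atomSet (q : CQuery) : Set QAtom := {a | a ∈ q.atoms}
def CQuery.varSet (q : CQuery) : Set ℕ := qvarsS q.atomSet

def QAtom.satBy : QAtom → Interp → (ℕ → Elem) → Prop
  | .ca A x, I, π => π x ∈ I.intC A
  | .ra p x y, I, π => (π x, π y) ∈ I.intR p

/-- `I ⊨ q(t)` for a tuple `t` of domain elements: some map `π` of the
variables into the domain sends the answer tuple to `t` and satisfies all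
atoms. -/
def Interp.satCQ (I : Interp) (q : CQuery) (t : List Elem) : Prop :=
  ∃ π : ℕ → Elem, (∀ v ∈ q.varSet, π v ∈ I.dom) ∧
    q.ansVars.map π = t ∧ ∀ a ∈ q.atoms, a.satBy I π

/-- `K ⊨ q(t)` for a tuple `t` of individuals. -/
def KB.entailsCQ (K : KB) (q : CQuery) (t : List ℕ) : Prop :=
  ∀ I : Interp, isModel I K → I.satCQ q (t.map Elem.ind)

/-- An ontology-mediated query. -/
structure OMQ where
  tbox : TBox
  sig : Set ClosedPred
  q : CQuery

def OMQ.kb (Q : OMQ) (Ab : ABox) : KB := ⟨Q.tbox, Q.sig, Ab⟩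

/-- `t ∈ cert(Q, A)`: `t` is a tuple (of the query's arity) of individuals
occurring in the KB that is entailed. -/
def certOMQ (Q : OMQ) (Ab : ABox) (t : List ℕ) : Prop :=
  t.length = Q.q.ansVars.length ∧ (∀ a ∈ t, a ∈ (Q.kb Ab).inds) ∧
  (Q.kb Ab).entailsCQ Q.q t

/-- c-variables of an OMQ. -/
def isCVar (Q : OMQ) (x : ℕ) : Prop :=
  x ∈ Q.q.ansVars ∨
  (∃ p y, (QAtom.ra p x y ∈ Q.q.atoms ∨ QAtom.ra p y x ∈ Q.q.atoms) ∧
      roleClosed Q.tbox Q.sig (.name p)) ∨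
  (∃ A, QAtom.ca A x ∈ Q.q.atoms ∧ ClosedPred.cp A ∈ Q.sig)

/-- A c-safe OMQ: all variables of the query are c-variables. -/
def cSafe (Q : OMQ) : Prop := ∀ x ∈ Q.q.varSet, isCVar Q x

/-! ## Query graph, acyclicity -/

/-- The query (Gaifman) graph of a set of atoms. -/
def queryGraphS (s : Set QAtom) : SimpleGraph ℕ where
  Adj x y := x ≠ y ∧ ∃ a ∈ s, x ∈ a.vars ∧ y ∈ a.vars
  symm := ⟨fun x y h => ⟨h.1.symm, h.2.imp fun a h' => ⟨h'.1, h'.2.2, h'.2.1⟩⟩⟩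
  loopless := ⟨fun x h => h.1 rfl⟩

def CQConnectedS (s : Set QAtom) : Prop :=
  ∀ x ∈ qvarsS s, ∀ y ∈ qvarsS s, (queryGraphS s).Reachable x y

/-- Acyclic CQ: the query graph is acyclic, and every edge carries exactly
one role atom. -/
def CQAcyclicS (s : Set QAtom) : Prop :=
  (queryGraphS s).IsAcyclic ∧
  ∀ x y, (queryGraphS s).Adj x y →
    ∃! a : QAtom, a ∈ s ∧ ∃ p, a = QAtom.ra p x y ∨ a = QAtom.ra p y x

/-- `q⁻`: the atoms of `Q` minus the role atoms connecting two c-variables. -/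
def qminus (Q : OMQ) : Set QAtom :=
  {a | a ∈ Q.q.atoms ∧ ¬ ∃ p x y, a = QAtom.ra p x y ∧ isCVar Q x ∧ isCVar Q y}

/-- c-acyclicity: `q⁻` is acyclic and every connected component of `G(q⁻)`
contains exactly one c-variable. -/
def cAcyclic (Q : OMQ) : Prop :=
  CQAcyclicS (qminus Q) ∧
  ∀ x ∈ qvarsS (qminus Q),
    ∃! y, y ∈ qvarsS (qminus Q) ∧ (queryGraphS (qminus Q)).Reachable x y ∧ isCVar Q y

/-- Instance query: a single atom, all of whose variables are answer variables. -/
def isInstanceQuery (q : CQuery) : Prop :=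
  (∃ a : QAtom, q.atoms = [a]) ∧ ∀ v ∈ q.varSet, v ∈ q.ansVars

/-! ## Rooted tree presentations of acyclic CQs and query concepts -/

/-- Rooted trees presenting connected acyclic CQs: a node carries its
variable, the concept names labelling it, and its children together with the
(possibly inverse) role connecting to them. -/
inductive QTree : Type
  | node : ℕ → List ℕ → List (DLRole × QTree) → QTree

def QTree.root : QTree → ℕ
  | .node x _ _ => x

def conjOfList : List DLConcept → DLConcept
  | [] => .top
  | C :: rest => .conj C (conjOfList rest)

mutual
  /-- The query concept `C_{q,x}` determined by a rooted tree presentation. -/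
  def QTree.concept : QTree → DLConcept
    | .node _ cs children =>
        .conj (conjOfList (cs.map DLConcept.atom)) (QTree.childConcept children)
  def QTree.childConcept : List (DLRole × QTree) → DLConcept
    | [] => .top
    | (r, t) :: rest => .conj (.ex r (QTree.concept t)) (QTree.childConcept rest)
end

/-- The role atom represented by a tree edge from `x` to `y` labelled `r`. -/
def edgeAtom (x : ℕ) (r : DLRole) (y : ℕ) : QAtom :=
  match r with
  | .name p => .ra p x y
  | .inv p => .ra p y x

mutual
  /-- The set of atoms represented by a tree. -/
  def QTree.atomSet : QTree → Set QAtom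
    | .node x cs children =>
        {a | ∃ A ∈ cs, a = QAtom.ca A x} ∪ QTree.childAtomSet x children
  def QTree.childAtomSet : ℕ → List (DLRole × QTree) → Set QAtom
    | _, [] => ∅
    | x, (r, t) :: rest =>
        insert (edgeAtom x r t.root) (QTree.atomSet t) ∪ QTree.childAtomSet x rest
end

mutual
  def QTree.varList : QTree → List ℕ
    | .node x _ children => x :: QTree.childVarList children
  def QTree.childVarList : List (DLRole × QTree) → List ℕ
    | [] => []
    | (_, t) :: rest => QTree.varList t ++ QTree.childVarList rest
end

/-- `t` is the rooted tree presentation of the CQ `q` (viewed as a set of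
atoms) with root variable `x`. -/
def QTree.presents (t : QTree) (q : Set QAtom) (x : ℕ) : Prop :=
  t.root = x ∧ t.atomSet = q ∧ t.varList.Nodup
/-! ## Concept and role names occurring in an OMQ -/

def QAtom.cnames : QAtom → Set ℕ
  | .ca A _ => {A}
  | .ra _ _ _ => ∅

def QAtom.rnames : QAtom → Set ℕ
  | .ca _ _ => ∅
  | .ra p _ _ => {p}

def OMQ.cnames (Q : OMQ) : Set ℕ := TBox.cnames Q.tbox ∪ ⋃ a ∈ Q.q.atoms, QAtom.cnames a
def OMQ.rnames (Q : OMQ) : Set ℕ := TBox.rnames Q.tbox ∪ ⋃ a ∈ Q.q.atoms, QAtom.rnames a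
/-! # Cores and extensions -/

/-- The possible domain of a core for `K`: the individuals of `K` plus the
fringe individuals `c^α` for existential inclusions `α` of the TBox. -/
def coreDom (K : KB) : Set Elem :=
  {e | ∃ a ∈ K.inds, e = Elem.ind a} ∪
  {e | ∃ a ∈ K.inds, ∃ α ∈ K.tbox, Inclusion.isExistential α ∧ e = Elem.fringe a α}

/-- A core for a KB with closed predicates (conditions (c1)--(c5)). -/
structure IsCore (Ic : Interp) (K : KB) : Prop where
  dom_sub : Ic.dom ⊆ coreDom K
  inds_sub : ∀ a ∈ K.inds, Elem.ind a ∈ Ic.dom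
  sna : ∀ a ∈ K.inds, Ic.intI a = Elem.ind a
  c2 : Ic.satABoxClosed K.sig K.abox
  c3 : ∀ α ∈ K.tbox,
        (¬ α.isExistential → Ic.satIncl α) ∧
        (∀ A r A', α = exIncl A r A' → roleClosed K.tbox K.sig r → Ic.satIncl α)
  c4 : ∀ p : ℕ, ∀ x ∈ Ic.intR p,
        (∃ a b, a ∈ K.inds ∧ b ∈ K.inds ∧ x = (Elem.ind a, Elem.ind b)) ∨
        (∃ a α, a ∈ K.inds ∧ x = (Elem.ind a, Elem.fringe a α)) ∨
        (∃ a α, a ∈ K.inds ∧ x = (Elem.fringe a α, Elem.ind a))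
  c5 : ∀ e ∈ Ic.dom, ¬ e.isFringe →
        ∀ A r A', exIncl A r A' ∈ K.tbox → e ∈ Ic.intC A →
          e ∈ Ic.cExt (.ex r (.atom A'))

/-- `J` is an extension of the core `Ic` (with respect to the closed
predicates `sig`). -/
structure IsExtension (J Ic : Interp) (sig : Set ClosedPred) : Prop where
  dom_sub : Ic.dom ⊆ J.dom
  cAgree : ∀ A : ℕ, Ic.intC A = J.intC A ∩ Ic.dom
  rAgree : ∀ p : ℕ, Ic.intR p = J.intR p ∩ (Ic.dom ×ˢ Ic.dom)
  closedC : ∀ A : ℕ, ClosedPred.cp A ∈ sig → J.intC A = Ic.intC A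
  closedR : ∀ p : ℕ, ClosedPred.rp p ∈ sig → J.intR p = Ic.intR p

/-! # Types and the model building game -/

/-- The basic concepts occurring in a concept. -/
def DLConcept.basics : DLConcept → Set DLConcept
  | .atom A => {.atom A}
  | .nom a => {.nom a}
  | .top => {.top}
  | .bot => {.bot}
  | .neg C => C.basics
  | .conj C D => C.basics ∪ D.basics
  | .disj C D => C.basics ∪ D.basics
  | .ex _ C => C.basics
  | .all _ C => C.basics

def Inclusion.basics : Inclusion → Set DLConcept
  | .concl C D => C.basics ∪ D.basics
  | .rolel _ _ => ∅

/-- `N_C⁺(T)`: the basic concepts occurring in `T`, together with `⊤`, `⊥`. -/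
def TBox.basicConcepts (T : TBox) : Set DLConcept :=
  {DLConcept.top, DLConcept.bot} ∪ ⋃ α ∈ T, Inclusion.basics α

/-- A type over `T`. -/
def IsType (T : TBox) (τ : Set DLConcept) : Prop :=
  τ ⊆ TBox.basicConcepts T ∧ DLConcept.top ∈ τ ∧ DLConcept.bot ∉ τ

/-- `type(e, I)`. -/
def typeOf (T : TBox) (I : Interp) (e : Elem) : Set DLConcept :=
  {B | B ∈ TBox.basicConcepts T ∧ e ∈ I.cExt B}

/-- `τ` is realized in `I`. -/
def realizedIn (T : TBox) (I : Interp) (τ : Set DLConcept) : Prop :=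
  ∃ e ∈ I.dom, typeOf T I e = τ

def conjuncts : DLConcept → Set DLConcept
  | .conj C D => conjuncts C ∪ conjuncts D
  | C => {C}

def disjuncts : DLConcept → Set DLConcept
  | .disj C D => disjuncts C ∪ disjuncts D
  | C => {C}

/-- `τ` satisfies an (N1) inclusion. -/
def typeSatN1 (τ : Set DLConcept) : Inclusion → Prop
  | .concl C D => conjuncts C ⊆ τ → ∃ B ∈ disjuncts D, B ∈ τ
  | .rolel _ _ => True

/-- c-types. -/
def IsCType (T : TBox) (sig : Set ClosedPred) (τ : Set DLConcept) : Prop :=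
  (∃ a, DLConcept.nom a ∈ τ) ∨
  (∃ A, DLConcept.atom A ∈ τ ∧ ClosedPred.cp A ∈ sig) ∨
  (∃ A r A', exIncl A r A' ∈ T ∧ roleClosed T sig r ∧ DLConcept.atom A ∈ τ)

/-- The locally consistent types `LC(T, Σ, I_c)`. -/
def LC (T : TBox) (sig : Set ClosedPred) (Ic : Interp) : Set (Set DLConcept) :=
  {τ | IsType T τ ∧ (∀ α ∈ T, IsN1 α → typeSatN1 τ α) ∧
       (IsCType T sig τ → realizedIn T Ic τ)}

/-- Conditions (C1) and (C2): `τ'` is a legal response to the challenge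
`A ⊑ ∃r.A'` against the current type `τ`. -/
def LegalResponse (T : TBox) (A : ℕ) (r : DLRole) (A' : ℕ) (τ τ' : Set DLConcept) : Prop :=
  DLConcept.atom A' ∈ τ' ∧
  ∀ A₁ s A₂, Inclusion.concl (.atom A₁) (.all s (.atom A₂)) ∈ T →
    (subRole T r s → DLConcept.atom A₁ ∈ τ → DLConcept.atom A₂ ∈ τ') ∧
    (subRole T r.invert s → DLConcept.atom A₁ ∈ τ' → DLConcept.atom A₂ ∈ τ)

/-- A strategy for Bob, as a partial function. -/
abbrev Strategy := Set DLConcept → Inclusion → Option (Set DLConcept)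

/-- Well-formedness of a strategy: it is defined only on pairs of a non-c-type
`τ` and an existential inclusion of `T` triggered by `τ`, and returns a type
satisfying (C1) and (C2). -/
def IsStrategy (T : TBox) (sig : Set ClosedPred) (str : Strategy) : Prop :=
  ∀ τ α τ', str τ α = some τ' →
    IsType T τ ∧ ¬ IsCType T sig τ ∧ IsType T τ' ∧
    ∃ A r A', α = exIncl A r A' ∧ α ∈ T ∧ DLConcept.atom A ∈ τ ∧
      LegalResponse T A r A' τ τ'

/-- A finite run `a α₁ τ₁ α₂ τ₂ ⋯`. -/
structure GRun where
  start : Elem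
  steps : List (Inclusion × Set DLConcept)

/-- `tail(w)`. -/
def GRun.tail (T : TBox) (Ic : Interp) (w : GRun) : Set DLConcept :=
  match w.steps.getLast? with
  | some s => s.2
  | none => typeOf T Ic w.start

/-- `w` is a (finite) run of the game on the core `Ic`: it starts at a fringe
individual of `Ic`, its inclusions are existential inclusions of `T`, its
types are types over `T`, and only its last type may be a c-type. -/
def IsRunOn (T : TBox) (sig : Set ClosedPred) (Ic : Interp) (w : GRun) : Prop :=
  (∃ c α, w.start = Elem.fringe c α) ∧ w.start ∈ Ic.dom ∧
  (∀ s ∈ w.steps, s.1 ∈ T ∧ s.1.isExistential ∧ IsType T s.2) ∧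
  (∀ (i : ℕ) s, w.steps[i]? = some s → i + 1 < w.steps.length → ¬ IsCType T sig s.2)

def FollowsFrom (str : Strategy) : Set DLConcept → List (Inclusion × Set DLConcept) → Prop
  | _, [] => True
  | τ, (α, τ') :: rest => str τ α = some τ' ∧ FollowsFrom str τ' rest

/-- `w` follows the strategy `str` on `Ic`. -/
def RunFollows (T : TBox) (Ic : Interp) (str : Strategy) (w : GRun) : Prop :=
  FollowsFrom str (typeOf T Ic w.start) w.steps

/-- A non-losing strategy for Bob on `Ic`. -/
def NonLosing (T : TBox) (sig : Set ClosedPred) (Ic : Interp) (str : Strategy) : Prop :=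
  IsStrategy T sig str ∧
  ∀ w : GRun, IsRunOn T sig Ic w → RunFollows T Ic str w →
    w.tail T Ic ∈ LC T sig Ic ∧
    (¬ IsCType T sig (w.tail T Ic) →
      ∀ A r A', exIncl A r A' ∈ T → DLConcept.atom A ∈ w.tail T Ic →
        ∃ τ', str (w.tail T Ic) (exIncl A r A') = some τ')

/-! # The marking algorithm -/

/-- The types marked by the type elimination algorithm `Mark(T, Σ, I_c)`:
the least set containing all types violating some (N1) inclusion, all
c-types not realized in `I_c`, and closed under the rule (M_∃): a type gets
marked if some existential inclusion triggered by it has all its legal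
responses already marked. -/
inductive Marked (T : TBox) (sig : Set ClosedPred) (Ic : Interp) : Set DLConcept → Prop
  | n1 {τ : Set DLConcept} : IsType T τ →
      (∃ α ∈ T, IsN1 α ∧ ¬ typeSatN1 τ α) → Marked T sig Ic τ
  | closed {τ : Set DLConcept} : IsType T τ → IsCType T sig τ →
      ¬ realizedIn T Ic τ → Marked T sig Ic τ
  | exStep {τ : Set DLConcept} {A : ℕ} {r : DLRole} {A' : ℕ} :
      IsType T τ → exIncl A r A' ∈ T → DLConcept.atom A ∈ τ →
      (∀ τ', IsType T τ' → LegalResponse T A r A' τ τ' → Marked T sig Ic τ') →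
      Marked T sig Ic τ
/-! # Datalog with disjunction and negation, stable model semantics -/

/-- Predicate symbols: the concept names (unary), the role names (binary),
the built-in inequality predicate, and auxiliary predicates. -/
inductive DPred : Type
  | concept : ℕ → DPred
  | role : ℕ → DPred
  | neq : DPred
  | aux : ℕ → DPred
  deriving DecidableEq

inductive DTerm : Type
  | var : ℕ → DTerm
  | const : ℕ → DTerm
  deriving DecidableEq

structure DAtom where
  pred : DPred
  args : List DTerm
  deriving DecidableEq

/-- Ground atoms (over the constants). -/
structure GAtom where
  pred : DPred
  args : List ℕ
  deriving DecidableEq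

/-- A rule `h₁ ∨ ⋯ ∨ hₙ ← b₁, …, bₖ, not c₁, …, not cₘ`. -/
structure DRule where
  head : List DAtom
  posBody : List DAtom
  negBody : List DAtom
  deriving DecidableEq

abbrev DProgram := List DRule

def DTerm.constOf : DTerm → Set ℕ
  | .var _ => ∅
  | .const c => {c}

def DTerm.varOf : DTerm → Set ℕ
  | .var v => {v}
  | .const _ => ∅

def DAtom.consts (a : DAtom) : Set ℕ := ⋃ t ∈ a.args, DTerm.constOf t
def DAtom.vars (a : DAtom) : Set ℕ := ⋃ t ∈ a.args, DTerm.varOf t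
def DRule.atoms (ρ : DRule) : List DAtom := ρ.head ++ ρ.posBody ++ ρ.negBody
def DRule.consts (ρ : DRule) : Set ℕ := ⋃ a ∈ ρ.atoms, DAtom.consts a
def DRule.vars (ρ : DRule) : Set ℕ := ⋃ a ∈ ρ.atoms, DAtom.vars a
def progConsts (P : DProgram) : Set ℕ := ⋃ ρ ∈ P, DRule.consts ρ

/-- Safety: every variable of the rule occurs in a positive body atom. -/
def DRule.safe (ρ : DRule) : Prop := ∀ v ∈ ρ.vars, ∃ a ∈ ρ.posBody, v ∈ a.vars

def safeProgram (P : DProgram) : Prop := ∀ ρ ∈ P, ρ.safe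
def nonDisjunctive (P : DProgram) : Prop := ∀ ρ ∈ P, ρ.head.length ≤ 1
def positiveProgram (P : DProgram) : Prop := ∀ ρ ∈ P, ρ.negBody = []
/-- No occurrence of the built-in inequality predicate. -/
def neqFree (P : DProgram) : Prop := ∀ ρ ∈ P, ∀ a ∈ ρ.atoms, a.pred ≠ DPred.neq

/-- Ground rules. -/
structure GRRule where
  head : List GAtom
  posBody : List GAtom
  negBody : List GAtom

def DTerm.subst (σ : ℕ → ℕ) : DTerm → ℕ
  | .var v => σ v
  | .const c => c

def DAtom.inst (σ : ℕ → ℕ) (a : DAtom) : GAtom := ⟨a.pred, a.args.map (DTerm.subst σ)⟩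

def DRule.inst (σ : ℕ → ℕ) (ρ : DRule) : GRRule :=
  ⟨ρ.head.map (DAtom.inst σ), ρ.posBody.map (DAtom.inst σ), ρ.negBody.map (DAtom.inst σ)⟩

/-- The grounding of a program: all instances of its rules over the
constants occurring in the program. -/
def grounding (P : DProgram) : Set GRRule :=
  {g | ∃ ρ ∈ P, ∃ σ : ℕ → ℕ, (∀ v ∈ DRule.vars ρ, σ v ∈ progConsts P) ∧ g = DRule.inst σ ρ}

/-- A constant occurring in a non-inequality atom of `I`. -/
def activeConst (I : Finset GAtom) (c : ℕ) : Prop :=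
  ∃ g ∈ I, g.pred ≠ DPred.neq ∧ c ∈ g.args

/-- The built-in semantics of the inequality predicate: `a ≠ b` holds in `I`
iff `a` and `b` are distinct constants both occurring in non-inequality atoms
of `I`. -/
def respectsNeq (I : Finset GAtom) : Prop :=
  ∀ args : List ℕ, (⟨DPred.neq, args⟩ : GAtom) ∈ I ↔
    ∃ a b : ℕ, args = [a, b] ∧ a ≠ b ∧ activeConst I a ∧ activeConst I b

/-- `I` is a (Herbrand) model of a set of positive ground rules. -/
def isHModel (I : Finset GAtom) (G : Set GRRule) : Prop :=
  respectsNeq I ∧ ∀ g ∈ G, (∀ b ∈ g.posBody, b ∈ I) → ∃ h ∈ g.head, h ∈ I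

/-- The GL-reduct of a set of ground rules with respect to `I`. -/
def glReduct (G : Set GRRule) (I : Finset GAtom) : Set GRRule :=
  {g' | ∃ g ∈ G, (∀ n ∈ g.negBody, n ∉ I) ∧ g' = ⟨g.head, g.posBody, []⟩}

/-- `I` is a stable model of `P`: a minimal model of the GL-reduct of the
grounding of `P` with respect to `I`. -/
def isStable (P : DProgram) (I : Finset GAtom) : Prop :=
  isHModel I (glReduct (grounding P) I) ∧
  ∀ J : Finset GAtom, isHModel J (glReduct (grounding P) I) → J ⊆ I → J = I

/-- ABox assertions as facts. -/
def assertFact : Assertion → DRule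
  | .ca A a => ⟨[⟨DPred.concept A, [DTerm.const a]⟩], [], []⟩
  | .ra p a b => ⟨[⟨DPred.role p, [DTerm.const a, DTerm.const b]⟩], [], []⟩

def aboxFacts (Ab : ABox) : DProgram := Ab.map assertFact

/-- Ground atoms as facts. -/
def gfact (g : GAtom) : DRule := ⟨[⟨g.pred, g.args.map DTerm.const⟩], [], []⟩

def factProg (F : List GAtom) : DProgram := F.map gfact

def GAtom.rename (ρ : ℕ → ℕ) (g : GAtom) : GAtom := ⟨g.pred, g.args.map ρ⟩

def gconsts (F : List GAtom) : Set ℕ := ⋃ g ∈ F, {c | c ∈ g.args}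

/-- `t` is a certain answer to the query `(P, q̂)` over the database `D`:
`q̂(t)` belongs to every stable model of `P ∪ D`. -/
def certD (P : DProgram) (qp : DPred) (D : DProgram) (t : List ℕ) : Prop :=
  ∀ I : Finset GAtom, isStable (P ++ D) I → (⟨qp, t⟩ : GAtom) ∈ I

/-!
Let `f` send each fresh constant `ρ a` back to `a` and fix all other constants; by freshness it
fixes the constants of `P`. The atoms `g` with `f g ∈ I` satisfy every rule of `P`, since `f` maps
an instance of a rule to an instance over the constants of `P ∪ F` and `≠` does not occur in `P`;
they include every renamed fact, since `f` undoes `ρ` on the constants of `F`. The remaining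
difficulty is the built-in `≠`. Tagging each renamed fact with a predicate that occurs in no rule
body of `P` makes its constants active, and recomputing the `≠`-atoms from the active constants
yields a model: a renamed inequality fact `ρ a ≠ ρ b` holds there because `ρ` is injective.
-/

open Set Function

theorem List.finite_map_preimage_singleton {α β : Type*} {f : α → β}
    (hf : ∀ b, (f ⁻¹' {b}).Finite) (m : List β) : (List.map f ⁻¹' {m}).Finite := by
  induction m with
  | nil => exact (finite_singleton []).subset fun l hl => by simpa using hl
  | cons b m ih =>
    refine (((hf b).prod ih).image fun p => p.1 :: p.2).subset ?_
    rintro (_ | ⟨a, l⟩) hl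
    · simp at hl
    · simp only [mem_preimage, mem_singleton_iff, List.map_cons, List.cons.injEq] at hl
      exact ⟨(a, l), ⟨hl.1, hl.2⟩, rfl⟩

namespace GAtom

theorem finite_rename_preimage_singleton {f : ℕ → ℕ} (hf : ∀ b, (f ⁻¹' {b}).Finite)
    (w : GAtom) : (rename f ⁻¹' {w}).Finite :=
  ((List.finite_map_preimage_singleton hf w.args).image (mk w.pred)).subset <| by
    rintro ⟨p, l⟩ h
    simp only [mem_preimage, mem_singleton_iff, rename] at h
    subst h
    exact ⟨l, rfl, rfl⟩

noncomputable def pullback (f : ℕ → ℕ) (hf : ∀ b, (f ⁻¹' {b}).Finite) (I : Finset GAtom) :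
    Finset GAtom :=
  (I.finite_toSet.preimage' fun w _ => finite_rename_preimage_singleton hf w).toFinset

@[simp]
theorem mem_pullback {f : ℕ → ℕ} {hf : ∀ b, (f ⁻¹' {b}).Finite} {I : Finset GAtom}
    {g : GAtom} : g ∈ pullback f hf I ↔ g.rename f ∈ I := by
  simp [pullback]

end GAtom

open Classical in
noncomputable def collapse (ρ : ℕ → ℕ) (S : Set ℕ) (c : ℕ) : ℕ :=
  if c ∈ ρ '' S then invFunOn ρ S c else c

theorem collapse_apply_of_mem {ρ : ℕ → ℕ} {S : Set ℕ} (hρ : InjOn ρ S) {a : ℕ} (ha : a ∈ S) :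
    collapse ρ S (ρ a) = a := by
  rw [collapse, if_pos (mem_image_of_mem ρ ha)]
  exact hρ.leftInvOn_invFunOn ha

theorem collapse_apply_of_notMem {ρ : ℕ → ℕ} {S : Set ℕ} {c : ℕ} (hc : c ∉ ρ '' S) :
    collapse ρ S c = c := by
  rw [collapse, if_neg hc]

theorem finite_collapse_preimage_singleton (ρ : ℕ → ℕ) (S : Set ℕ) (b : ℕ) :
    (collapse ρ S ⁻¹' {b}).Finite := by
  refine (finite_singleton (ρ b)).insert b |>.subset fun c hc => ?_
  simp only [mem_preimage, mem_singleton_iff, collapse] at hc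
  split_ifs at hc with h
  · exact .inr (hc ▸ (invFunOn_eq h).symm)
  · exact .inl hc

theorem GAtom.rename_collapse_rename {ρ : ℕ → ℕ} {S : Set ℕ} (hρ : InjOn ρ S) {g : GAtom}
    (hg : ∀ c ∈ g.args, c ∈ S) : (g.rename ρ).rename (collapse ρ S) = g := by
  obtain ⟨p, l⟩ := g
  simp only [GAtom.rename, List.map_map, GAtom.mk.injEq, true_and]
  exact List.map_congr_left (g := id) (fun c hc => collapse_apply_of_mem hρ (hg c hc))
    |>.trans (List.map_id l)

def activeConsts (J : Finset GAtom) : Finset ℕ :=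
  {g ∈ J | g.pred ≠ .neq}.biUnion (·.args.toFinset)

theorem mem_activeConsts {J : Finset GAtom} {c : ℕ} : c ∈ activeConsts J ↔ activeConst J c := by
  simp [activeConsts, activeConst, and_assoc]

def neqClosure (J : Finset GAtom) : Finset GAtom :=
  {g ∈ J | g.pred ≠ .neq} ∪
    {p ∈ activeConsts J ×ˢ activeConsts J | p.1 ≠ p.2}.image fun p => ⟨.neq, [p.1, p.2]⟩

theorem mem_neqClosure_of_pred_ne {J : Finset GAtom} {g : GAtom} (hg : g.pred ≠ .neq) :
    g ∈ neqClosure J ↔ g ∈ J := by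
  simp only [neqClosure, Finset.mem_union, Finset.mem_filter, Finset.mem_image]
  refine ⟨?_, fun h => .inl ⟨h, hg⟩⟩
  rintro (⟨h, -⟩ | ⟨p, -, rfl⟩)
  exacts [h, absurd rfl hg]

theorem activeConst_neqClosure {J : Finset GAtom} {c : ℕ} :
    activeConst (neqClosure J) c ↔ activeConst J c := by
  constructor <;> rintro ⟨g, hg, hne, hc⟩
  exacts [⟨g, (mem_neqClosure_of_pred_ne hne).1 hg, hne, hc⟩,
    ⟨g, (mem_neqClosure_of_pred_ne hne).2 hg, hne, hc⟩]

theorem respectsNeq_neqClosure (J : Finset GAtom) : respectsNeq (neqClosure J) := by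
  intro args
  simp_rw [activeConst_neqClosure, ← mem_activeConsts]
  simp only [neqClosure, Finset.mem_union, Finset.mem_filter, ne_eq, not_true_eq_false, and_false,
    Finset.mem_image, Finset.mem_product, GAtom.mk.injEq, true_and, Prod.exists, false_or]
  constructor
  · rintro ⟨a, b, ⟨⟨ha, hb⟩, hab⟩, rfl⟩
    exact ⟨a, b, rfl, hab, ha, hb⟩
  · rintro ⟨a, b, rfl, hab, ha, hb⟩
    exact ⟨a, b, ⟨⟨ha, hb⟩, hab⟩, rfl⟩

theorem progConsts_append (P Q : DProgram) :
    progConsts (P ++ Q) = progConsts P ∪ progConsts Q := by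
  simp only [progConsts, List.mem_append, iUnion_or, iUnion_union_distrib]

theorem DRule.consts_subset_progConsts {P : DProgram} {r : DRule} (hr : r ∈ P) :
    r.consts ⊆ progConsts P :=
  subset_biUnion_of_mem (u := DRule.consts) hr

theorem DRule.consts_gfact (g : GAtom) : (gfact g).consts = {c | c ∈ g.args} := by
  ext c
  simp [DRule.consts, gfact, DRule.atoms, DAtom.consts, DTerm.constOf]

theorem progConsts_factProg (F : List GAtom) : progConsts (factProg F) = gconsts F := by
  simp [progConsts, factProg, gconsts, DRule.consts_gfact]

theorem gconsts_map_rename (ρ : ℕ → ℕ) (F : List GAtom) :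
    gconsts (F.map (GAtom.rename ρ)) = ρ '' gconsts F := by
  ext c
  simp only [gconsts, List.mem_map, mem_iUnion, mem_ofPred_eq, mem_image, exists_prop]
  constructor
  · rintro ⟨_, ⟨g, hg, rfl⟩, hc⟩
    obtain ⟨a, ha, rfl⟩ := List.mem_map.1 hc
    exact ⟨a, ⟨g, hg, ha⟩, rfl⟩
  · rintro ⟨a, ⟨g, hg, ha⟩, rfl⟩
    exact ⟨_, ⟨g, hg, rfl⟩, List.mem_map_of_mem ha⟩

theorem mapsTo_collapse_progConsts {P : DProgram} {F : List GAtom} {ρ : ℕ → ℕ}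
    (hρ : InjOn ρ (gconsts F)) (hP : ∀ c ∈ progConsts P, collapse ρ (gconsts F) c = c) :
    MapsTo (collapse ρ (gconsts F)) (progConsts (P ++ factProg (F.map (GAtom.rename ρ))))
      (progConsts (P ++ factProg F)) := by
  simp only [MapsTo, progConsts_append, progConsts_factProg, gconsts_map_rename]
  rintro c (hc | ⟨a, ha, rfl⟩)
  · exact .inl (by rwa [hP c hc])
  · exact .inr (by rwa [collapse_apply_of_mem hρ ha])

theorem DRule.inst_gfact (σ : ℕ → ℕ) (g : GAtom) : (gfact g).inst σ = ⟨[g], [], []⟩ := by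
  simp [DRule.inst, gfact, DAtom.inst, Function.comp_def, DTerm.subst]

theorem mem_of_gfact_mem {Q : DProgram} {I : Finset GAtom}
    (hI : ∀ g ∈ grounding Q, (∀ b ∈ g.posBody, b ∈ I) → ∃ h ∈ g.head, h ∈ I)
    {g : GAtom} (hg : gfact g ∈ Q) : g ∈ I := by
  have hvars : (gfact g).vars = ∅ := by
    simp [DRule.vars, gfact, DRule.atoms, DAtom.vars, DTerm.varOf]
  obtain ⟨h, hh, hI⟩ := hI _ ⟨gfact g, hg, id, by simp [hvars], (DRule.inst_gfact id g).symm⟩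
    (by simp)
  rwa [← List.mem_singleton.1 hh]

def GRRule.rename (f : ℕ → ℕ) (g : GRRule) : GRRule :=
  ⟨g.head.map (GAtom.rename f), g.posBody.map (GAtom.rename f), g.negBody.map (GAtom.rename f)⟩

theorem DAtom.rename_inst {f : ℕ → ℕ} (σ : ℕ → ℕ) {a : DAtom} (hf : ∀ c ∈ a.consts, f c = c) :
    (a.inst σ).rename f = a.inst (f ∘ σ) := by
  simp only [GAtom.rename, DAtom.inst, List.map_map, GAtom.mk.injEq, true_and]
  refine List.map_congr_left fun t ht => ?_
  cases t with
  | var v => rfl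
  | const c => exact hf c (mem_biUnion ht (by simp [DTerm.constOf]))

theorem DRule.rename_inst {f : ℕ → ℕ} (σ : ℕ → ℕ) {r : DRule} (hf : ∀ c ∈ r.consts, f c = c) :
    (r.inst σ).rename f = r.inst (f ∘ σ) := by
  have hatom : ∀ a ∈ r.atoms, (a.inst σ).rename f = a.inst (f ∘ σ) := fun a ha =>
    DAtom.rename_inst σ fun c hc => hf c (mem_biUnion ha hc)
  simp only [GRRule.rename, DRule.inst, List.map_map, GRRule.mk.injEq]
  refine ⟨?_, ?_, ?_⟩ <;> refine List.map_congr_left fun a ha => hatom a ?_ <;>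
    simp [DRule.atoms, ha]

theorem DRule.rename_inst_mem_grounding {Q Q' : DProgram} {r : DRule} {f σ : ℕ → ℕ} (hr : r ∈ Q)
    (hf : ∀ c ∈ r.consts, f c = c) (hfQ : MapsTo f (progConsts Q') (progConsts Q))
    (hσ : ∀ v ∈ r.vars, σ v ∈ progConsts Q') : (r.inst σ).rename f ∈ grounding Q :=
  ⟨r, hr, f ∘ σ, fun v hv => hfQ (hσ v hv), DRule.rename_inst σ hf⟩

theorem GRRule.sat_of_sat_rename {I J : Finset GAtom} {f : ℕ → ℕ} {g : GRRule}
    (hI : (∀ b ∈ (g.rename f).posBody, b ∈ I) → ∃ h ∈ (g.rename f).head, h ∈ I)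
    (hbody : ∀ b ∈ g.posBody, b ∈ J → b.rename f ∈ I)
    (hhead : ∀ h ∈ g.head, h.rename f ∈ I → h ∈ J) :
    (∀ b ∈ g.posBody, b ∈ J) → ∃ h ∈ g.head, h ∈ J := by
  intro hJ
  obtain ⟨_, hmem, hhI⟩ := hI <| by
    simp only [GRRule.rename, List.mem_map]
    rintro _ ⟨b, hb, rfl⟩
    exact hbody b hb (hJ b hb)
  obtain ⟨h, hh, rfl⟩ := List.mem_map.1 hmem
  exact ⟨h, hh, hhead h hh hhI⟩

theorem exists_aux_notMem_posBody (P : DProgram) :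
    ∃ k, ∀ r ∈ P, ∀ b ∈ r.posBody, b.pred ≠ .aux k := by
  obtain ⟨_, ⟨k, rfl⟩, hk⟩ := (infinite_range_of_injective fun _ _ => DPred.aux.inj)
    |>.exists_notMem_finset ((P.flatMap DRule.posBody).map DAtom.pred).toFinset
  refine ⟨k, fun r hr b hb h => hk ?_⟩
  simp only [List.mem_toFinset, List.mem_map, List.mem_flatMap]
  exact ⟨b, ⟨r, hr, hb⟩, h⟩

noncomputable def renamedModel (I : Finset GAtom) (F : List GAtom) (ρ : ℕ → ℕ) (k : ℕ) :
    Finset GAtom :=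
  neqClosure (GAtom.pullback (collapse ρ (gconsts F)) (finite_collapse_preimage_singleton ρ _) I ∪
    (F.map fun g => (⟨.aux k, g.args.map ρ⟩ : GAtom)).toFinset)

section renamedModel

variable {I : Finset GAtom} {F : List GAtom} {ρ : ℕ → ℕ} {k : ℕ} {g : GAtom}

theorem mem_renamedModel_of_rename_mem (hg : g.pred ≠ .neq)
    (h : g.rename (collapse ρ (gconsts F)) ∈ I) : g ∈ renamedModel I F ρ k :=
  (mem_neqClosure_of_pred_ne hg).2 (Finset.mem_union_left _ (GAtom.mem_pullback.2 h))

theorem rename_mem_of_mem_renamedModel (hg : g.pred ≠ .neq) (hk : g.pred ≠ .aux k)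
    (h : g ∈ renamedModel I F ρ k) : g.rename (collapse ρ (gconsts F)) ∈ I := by
  rcases Finset.mem_union.1 ((mem_neqClosure_of_pred_ne hg).1 h) with hB | hT
  · exact GAtom.mem_pullback.1 hB
  · obtain ⟨_, -, rfl⟩ := List.mem_map.1 (List.mem_toFinset.1 hT)
    exact absurd rfl hk

theorem rename_mem_renamedModel (hρ : InjOn ρ (gconsts F)) (hI : respectsNeq I) (hgF : g ∈ F)
    (hgI : g ∈ I) : g.rename ρ ∈ renamedModel I F ρ k := by
  have hgS : ∀ c ∈ g.args, c ∈ gconsts F := fun c hc => mem_biUnion hgF hc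
  obtain ⟨p, l⟩ := g
  by_cases hp : p = .neq
  · subst hp
    obtain ⟨a, b, rfl, hab, -, -⟩ := (hI l).1 hgI
    have hne : ρ a ≠ ρ b := fun h => hab (hρ (hgS a (by simp)) (hgS b (by simp)) h)
    have htag : ∀ c ∈ [ρ a, ρ b], activeConst (renamedModel I F ρ k) c := fun c hc =>
      activeConst_neqClosure.2 ⟨⟨.aux k, [ρ a, ρ b]⟩,
        Finset.mem_union_right _ (List.mem_toFinset.2 (List.mem_map_of_mem hgF)), by simp, hc⟩
    exact (respectsNeq_neqClosure _ _).2 ⟨ρ a, ρ b, rfl, hne, htag _ (by simp), htag _ (by simp)⟩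
  · exact mem_renamedModel_of_rename_mem hp (by rwa [GAtom.rename_collapse_rename hρ hgS])

end renamedModel

/-- Let `P` be a positive (possibly disjunctive) Datalog
program without occurrences of the built-in inequality predicate `≠`, and let
`F` be a set of ground facts. If `P ∪ F` has a model, then `P ∪ F'` has a
model, where `F'` is obtained from `F` by injectively renaming its constants
to fresh constants not occurring in `P ∪ F`. -/
theorem stmt15_rename_constants (P : DProgram) (hsafe : safeProgram P)
    (hpos : positiveProgram P) (hneq : neqFree P)
    (F : List GAtom) (ρ : ℕ → ℕ)
    (hinj : ∀ a ∈ gconsts F, ∀ b ∈ gconsts F, ρ a = ρ b → a = b)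
    (hfresh : ∀ a ∈ gconsts F, ρ a ∉ progConsts (P ++ factProg F))
    (hmod : ∃ I : Finset GAtom, isHModel I (grounding (P ++ factProg F))) :
    ∃ I' : Finset GAtom,
      isHModel I' (grounding (P ++ factProg (F.map (GAtom.rename ρ)))) := by
  obtain ⟨I, hIneq, hI⟩ := hmod
  obtain ⟨k, hk⟩ := exists_aux_notMem_posBody P
  have hρ : InjOn ρ (gconsts F) := fun a ha b hb => hinj a ha b hb
  have hfix : ∀ c ∈ progConsts P, collapse ρ (gconsts F) c = c := fun c hc =>
    collapse_apply_of_notMem fun ⟨a, ha, hac⟩ =>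
      hfresh a ha (by rw [progConsts_append, hac]; exact .inl hc)
  refine ⟨renamedModel I F ρ k, respectsNeq_neqClosure _, ?_⟩
  rintro _ ⟨r, hr, σ, hσ, rfl⟩
  rcases List.mem_append.1 hr with hrP | hrF
  · have hrfix := fun c hc => hfix c (r.consts_subset_progConsts hrP hc)
    have hneq_r := fun a (ha : a ∈ r.atoms) => hneq r hrP a ha
    refine GRRule.sat_of_sat_rename (hI _ (DRule.rename_inst_mem_grounding
      (List.mem_append_left _ hrP) hrfix (mapsTo_collapse_progConsts hρ hfix) hσ)) ?_ ?_
    · simp only [DRule.inst, List.mem_map]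
      rintro _ ⟨b, hb, rfl⟩
      exact rename_mem_of_mem_renamedModel (hneq_r b (by simp [DRule.atoms, hb])) (hk r hrP b hb)
    · simp only [DRule.inst, List.mem_map]
      rintro _ ⟨h, hh, rfl⟩
      exact mem_renamedModel_of_rename_mem (hneq_r h (by simp [DRule.atoms, hh]))
  · obtain ⟨_, hg', rfl⟩ := List.mem_map.1 hrF
    obtain ⟨g, hg, rfl⟩ := List.mem_map.1 hg'
    rw [DRule.inst_gfact]
    exact fun _ => ⟨_, List.mem_singleton_self _, rename_mem_renamedModel hρ hIneq hg
      (mem_of_gfact_mem hI (List.mem_append_right P (List.mem_map_of_mem hg)))⟩
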